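/- Randomized exact matching test correctness: let G₀ = (V, E₀) and G₁ = (V, E₁) be simple graphs on the same vertex set V with |V| = n even, let F be a finite field, and choose values r_e ∈ F independently and uniformly at random for each e ∈ E₀ ⊔ E₁. Fix k ∈ {0, 1, …, n/2}. If G = G₀ + G₁ has a perfect matching of weight exactly k, then the probability that the coefficient [y^k] pf T̃(G₀, G₁) ∈ F equals 0 is at most n/|F|; if G has no perfect matching of weight exactly k, then [y^k] pf T̃(G₀, G₁) = 0 with probability 1. -/

import Mathlib

open scoped Classical

/-- The index `2i` (0-based), corresponding to `2i - 1` in 1-based notation. -/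
def evenIdx {m : ℕ} (i : Fin m) : Fin (2 * m) := ⟨2 * i.val, by have := i.isLt; omega⟩

/-- The index `2i + 1` (0-based), corresponding to `2i` in 1-based notation. -/
def oddIdx {m : ℕ} (i : Fin m) : Fin (2 * m) := ⟨2 * i.val + 1, by have := i.isLt; omega⟩

/-- The pfaffian of a `2m × 2m` matrix: the sum over all permutations `σ` of
`{0, …, 2m-1}` satisfying `σ(0) < σ(2) < ⋯ < σ(2m-2)` and `σ(2i) < σ(2i+1)` for each `i`
of `sgn(σ) · Π_i A_{σ(2i), σ(2i+1)}`. -/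
noncomputable def pfaffian {R : Type} [CommRing R] {m : ℕ}
    (A : Matrix (Fin (2 * m)) (Fin (2 * m)) R) : R :=
  ∑ σ ∈ Finset.univ.filter (fun σ : Equiv.Perm (Fin (2 * m)) =>
      (∀ i : Fin m, σ (evenIdx i) < σ (oddIdx i)) ∧
      StrictMono fun i : Fin m => σ (evenIdx i)),
    (Equiv.Perm.sign σ : ℤ) • ∏ i : Fin m, A (σ (evenIdx i)) (σ (oddIdx i))

/-- The Tutte matrix of `G` with the indeterminate `x_e` of each edge `e` replaced by the
field value `r e` (sign according to the order of the endpoints). -/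
noncomputable def tutteVals (F : Type) [Field F] {n : ℕ} (G : SimpleGraph (Fin n))
    (r : G.edgeSet → F) : Matrix (Fin n) (Fin n) F :=
  fun u v =>
    if h : G.Adj u v then
      (if u < v then r ⟨s(u, v), G.mem_edgeSet.mpr h⟩
       else - r ⟨s(u, v), G.mem_edgeSet.mpr h⟩)
    else 0

/-- The substituted weighted Tutte matrix `T̃(G₀, G₁) = T̃(G₀) + y·T̃(G₁) ∈ F[y]^{V×V}`
for the assignment `(r₀, r₁) ∈ F^{E₀ ⊔ E₁}`, with `y = Polynomial.X`. -/
noncomputable def substWeightedTutteMatrix (F : Type) [Field F] {n : ℕ}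
    (G₀ G₁ : SimpleGraph (Fin n)) (r₀ : G₀.edgeSet → F) (r₁ : G₁.edgeSet → F) :
    Matrix (Fin n) (Fin n) (Polynomial F) :=
  (tutteVals F G₀ r₀).map Polynomial.C +
    (Polynomial.X : Polynomial F) • (tutteVals F G₁ r₁).map Polynomial.C

/-- `(M₀, M₁)` is a perfect matching of the disjoint union `G₀ + G₁` of weight `k`:
`M₀` consists of (weight-0) edges of `G₀`, `M₁` of (weight-1) edges of `G₁`, all chosen
edges are pairwise vertex-disjoint, every vertex is covered, and exactly `k` edges come
from `G₁`. -/
def IsPerfectMatchingPairOfWeight {n : ℕ} (G₀ G₁ : SimpleGraph (Fin n))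
    (M₀ M₁ : Finset (Sym2 (Fin n))) (k : ℕ) : Prop :=
  ↑M₀ ⊆ G₀.edgeSet ∧ ↑M₁ ⊆ G₁.edgeSet ∧ Disjoint M₀ M₁ ∧
  ((↑(M₀ ∪ M₁) : Set (Sym2 (Fin n))).Pairwise fun e f => ∀ v, v ∈ e → v ∉ f) ∧
  (∀ v : Fin n, ∃ e ∈ M₀ ∪ M₁, v ∈ e) ∧ M₁.card = k

/-!
Expanding the pfaffian entrywise, `[y^k] pf T̃(G₀, G₁)` is the value at `r` of the polynomial
`∑ sgn σ · ∏ x_e`, summed over the pairings `σ` of the pfaffian together with a choice of `k` of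
their pairs that are edges of `G₁` (variable `x_{inr e}`) while the others are edges of `G₀`
(variable `x_{inl e}`). Such a pairing is determined by its set of pairs, so the terms correspond
exactly to the perfect matchings of weight `k`. Without such a matching the polynomial is zero. With one, it is nonzero (at the indicator
point of the matching only its term survives, with value `±1`) and of total degree at most
`n / 2`, and the Schwartz–Zippel lemma bounds the probability of a zero by `n / (2|F|)`.
-/

open Finset

theorem MvPolynomial.card_filter_eval_eq_zero_div_le {σ F : Type*} [Fintype σ] [DecidableEq σ]
    [Field F] [Fintype F] {p : MvPolynomial σ F} (hp : p ≠ 0) :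
    (#{x : σ → F | eval x p = 0} : ℝ) / Fintype.card (σ → F) ≤
      p.totalDegree / Fintype.card F := by
  set e := Fintype.equivFin σ
  set q := renameEquiv F e p
  have hq : q ≠ 0 := (renameEquiv F e).injective.ne (by simpa using hp)
  have hsz := schwartz_zippel_totalDegree hq univ
  rw [totalDegree_renameEquiv, Fintype.piFinset_univ, card_univ] at hsz
  have hcard : #{x : σ → F | eval x p = 0} = #{f : Fin (Fintype.card σ) → F | eval f q = 0} :=
    card_equiv (e.arrowCongr (Equiv.refl F)) fun x => by
      simp [q, eval_rename, Function.comp_def]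
  rw [hcard, Fintype.card_fun]
  have := (NNRat.cast_le (K := ℝ)).mpr hsz
  push_cast at this ⊢
  exact this

theorem Polynomial.coeff_prod_C_add_X_mul_C {ι R : Type*} [DecidableEq ι] [CommRing R]
    (s : Finset ι) (a b : ι → R) (k : ℕ) :
    (∏ i ∈ s, (C (a i) + X * C (b i))).coeff k =
      ∑ S ∈ s.powersetCard k, ∏ i ∈ s, if i ∈ S then b i else a i := by
  simp_rw [add_comm (C _), Finset.prod_add, finsetSum_coeff, powersetCard_eq_filter, sum_filter]
  refine sum_congr rfl fun S hS => ?_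
  rw [prod_ite, filter_mem_eq_inter, inter_eq_right.mpr (mem_powerset.mp hS),
    filter_notMem_eq_sdiff, prod_mul_distrib, prod_const, ← map_prod, ← map_prod, mul_assoc,
    ← C_mul, mul_comm (X ^ _), coeff_C_mul_X_pow]
  exact if_congr eq_comm rfl rfl

theorem exists_involutive_of_perfect_matching {V : Type*} {M : Finset (Sym2 V)}
    (hnd : ∀ e ∈ M, ¬ e.IsDiag)
    (hpw : (M : Set (Sym2 V)).Pairwise fun e f => ∀ v, v ∈ e → v ∉ f)
    (hcov : ∀ v, ∃ e ∈ M, v ∈ e) :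
    ∃ f : V → V, Function.Involutive f ∧ (∀ v, f v ≠ v) ∧ ∀ v w, s(v, w) ∈ M ↔ w = f v := by
  have hex v : ∃ w, s(v, w) ∈ M := by
    obtain ⟨e, he, hv⟩ := hcov v
    obtain ⟨w, rfl⟩ := Sym2.mem_iff_exists.mp hv
    exact ⟨w, he⟩
  choose f hf using hex
  have hiff v w : s(v, w) ∈ M ↔ w = f v := by
    refine ⟨fun h => ?_, fun h => h ▸ hf v⟩
    by_contra hne
    exact hpw h (hf v) (fun heq => hne (Sym2.congr_right.mp heq)) v (Sym2.mem_mk_left _ _)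
      (Sym2.mem_mk_left _ _)
  refine ⟨f, fun v => ((hiff _ _).mp (Sym2.eq_swap ▸ hf v)).symm, fun v h => ?_, hiff⟩
  exact hnd _ (hf v) (by rw [h]; exact Sym2.mk_isDiag_iff.mpr rfl)

section Pairing

variable {m : ℕ}

theorem evenIdx_injective : Function.Injective (evenIdx (m := m)) := fun i j h => by
  simp only [evenIdx, Fin.mk.injEq] at h
  exact Fin.ext (by omega)

theorem oddIdx_injective : Function.Injective (oddIdx (m := m)) := fun i j h => by
  simp only [oddIdx, Fin.mk.injEq] at h
  exact Fin.ext (by omega)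

theorem evenIdx_ne_oddIdx (i j : Fin m) : evenIdx i ≠ oddIdx j := by
  simp only [evenIdx, oddIdx, ne_eq, Fin.mk.injEq]
  omega

theorem exists_evenIdx_or_oddIdx_eq (j : Fin (2 * m)) :
    (∃ i, evenIdx i = j) ∨ ∃ i, oddIdx i = j := by
  rcases Nat.even_or_odd' j.val with ⟨c, hc | hc⟩
  · exact .inl ⟨⟨c, by omega⟩, Fin.ext hc.symm⟩
  · exact .inr ⟨⟨c, by omega⟩, Fin.ext hc.symm⟩

def interleave {α : Type*} (a b : Fin m → α) (j : Fin (2 * m)) : α :=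
  if j.val % 2 = 0 then a ⟨j.val / 2, by omega⟩ else b ⟨j.val / 2, by omega⟩

theorem interleave_evenIdx {α : Type*} (a b : Fin m → α) (i : Fin m) :
    interleave a b (evenIdx i) = a i := by
  simp only [interleave, evenIdx, Nat.mul_mod_right, if_true]
  congr
  omega

theorem interleave_oddIdx {α : Type*} (a b : Fin m → α) (i : Fin m) :
    interleave a b (oddIdx i) = b i := by
  rw [interleave, if_neg (by simp [oddIdx])]
  congr
  simp only [oddIdx]
  omega

theorem interleave_injective {α : Type*} {a b : Fin m → α} (ha : Function.Injective a)
    (hb : Function.Injective b) (hab : ∀ i j, a i ≠ b j) :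
    Function.Injective (interleave a b) := by
  intro x y hxy
  rcases exists_evenIdx_or_oddIdx_eq x with ⟨i, rfl⟩ | ⟨i, rfl⟩ <;>
    rcases exists_evenIdx_or_oddIdx_eq y with ⟨j, rfl⟩ | ⟨j, rfl⟩ <;>
    simp only [interleave_evenIdx, interleave_oddIdx] at hxy
  · rw [ha hxy]
  · exact absurd hxy (hab i j)
  · exact absurd hxy.symm (hab j i)
  · rw [hb hxy]

def pfaffianPerms (m : ℕ) : Finset (Equiv.Perm (Fin (2 * m))) :=
  univ.filter fun σ => (∀ i : Fin m, σ (evenIdx i) < σ (oddIdx i)) ∧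
    StrictMono fun i : Fin m => σ (evenIdx i)

theorem pfaffian_eq_sum_pfaffianPerms {R : Type} [CommRing R]
    (A : Matrix (Fin (2 * m)) (Fin (2 * m)) R) :
    pfaffian A = ∑ σ ∈ pfaffianPerms m,
      (Equiv.Perm.sign σ : ℤ) • ∏ i : Fin m, A (σ (evenIdx i)) (σ (oddIdx i)) := rfl

def pairEdge (σ : Equiv.Perm (Fin (2 * m))) (i : Fin m) : Sym2 (Fin (2 * m)) :=
  s(σ (evenIdx i), σ (oddIdx i))

theorem eq_of_mem_pairEdge {σ : Equiv.Perm (Fin (2 * m))} {i j : Fin m} {v : Fin (2 * m)}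
    (hi : v ∈ pairEdge σ i) (hj : v ∈ pairEdge σ j) : i = j := by
  rw [pairEdge, Sym2.mem_iff] at hi hj
  rcases hi with rfl | rfl <;> rcases hj with h | h <;> have h := σ.injective h
  · exact evenIdx_injective h
  · exact absurd h (evenIdx_ne_oddIdx i j)
  · exact absurd h.symm (evenIdx_ne_oddIdx j i)
  · exact oddIdx_injective h

theorem exists_mem_pairEdge (σ : Equiv.Perm (Fin (2 * m))) (v : Fin (2 * m)) :
    ∃ i, v ∈ pairEdge σ i := by
  rcases exists_evenIdx_or_oddIdx_eq (σ.symm v) with ⟨i, hi⟩ | ⟨i, hi⟩ <;>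
    refine ⟨i, Sym2.mem_iff.mpr ?_⟩
  · exact .inl (by rw [hi, σ.apply_symm_apply])
  · exact .inr (by rw [hi, σ.apply_symm_apply])

theorem pairEdge_injective (σ : Equiv.Perm (Fin (2 * m))) : Function.Injective (pairEdge σ) :=
  fun i j h => eq_of_mem_pairEdge (Sym2.mem_mk_left _ _)
    (h ▸ Sym2.mem_mk_left _ _ : σ (evenIdx i) ∈ pairEdge σ j)

theorem eq_and_eq_of_pairEdge_eq {σ σ' : Equiv.Perm (Fin (2 * m))} (hσ : σ ∈ pfaffianPerms m)
    (hσ' : σ' ∈ pfaffianPerms m) {i j : Fin m} (h : pairEdge σ i = pairEdge σ' j) :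
    σ (evenIdx i) = σ' (evenIdx j) ∧ σ (oddIdx i) = σ' (oddIdx j) := by
  have hi := ((mem_filter.mp hσ).2.1 i).le
  have hj := ((mem_filter.mp hσ').2.1 j).le
  have hinf := congrArg Sym2.inf h
  have hsup := congrArg Sym2.sup h
  simp only [pairEdge, Sym2.inf_mk, Sym2.sup_mk, inf_eq_left.mpr hi, inf_eq_left.mpr hj,
    sup_eq_right.mpr hi, sup_eq_right.mpr hj] at hinf hsup
  exact ⟨hinf, hsup⟩

theorem eq_of_forall_pairEdge_mem_range {σ σ' : Equiv.Perm (Fin (2 * m))}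
    (hσ : σ ∈ pfaffianPerms m) (hσ' : σ' ∈ pfaffianPerms m)
    (h : ∀ i, pairEdge σ i ∈ Set.range (pairEdge σ')) : σ = σ' := by
  choose f hf using h
  have hpairs i := eq_and_eq_of_pairEdge_eq hσ' hσ (hf i)
  -- Both enumerate their pairs by increasing first entry, so the reindexing `f` is monotone.
  have hf_mono : StrictMono f := fun i j hij => by
    rw [← (mem_filter.mp hσ').2.2.lt_iff_lt]
    simp only [(hpairs i).1, (hpairs j).1]
    exact (mem_filter.mp hσ).2.2 hij
  have hf_id : ∀ i, f i = i := fun i => hf_mono.apply_eq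
  ext x
  rcases exists_evenIdx_or_oddIdx_eq x with ⟨i, rfl⟩ | ⟨i, rfl⟩
  · simpa [hf_id] using congrArg Fin.val (hpairs i).1.symm
  · simpa [hf_id] using congrArg Fin.val (hpairs i).2.symm

theorem exists_mem_pfaffianPerms_of_involutive {f : Fin (2 * m) → Fin (2 * m)}
    (hf : Function.Involutive f) (hfix : ∀ v, f v ≠ v) :
    ∃ σ ∈ pfaffianPerms m, ∀ i, σ (oddIdx i) = f (σ (evenIdx i)) := by
  set L : Finset (Fin (2 * m)) := {v | v < f v}
  have hL_compl : #{v | ¬ v < f v} = #L := card_equiv hf.toPerm fun v => by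
    simp only [mem_filter, mem_univ, true_and, Function.Involutive.coe_toPerm, hf v, not_lt, L]
    exact ⟨fun h => lt_of_le_of_ne h (hfix v), le_of_lt⟩
  have hL : #L = m := by
    have := card_filter_add_card_filter_not (s := univ) fun v : Fin (2 * m) => v < f v
    rw [hL_compl, card_univ, Fintype.card_fin] at this
    change #L + #L = 2 * m at this
    omega
  set ord := L.orderEmbOfFin hL
  have hord i : ord i < f (ord i) := (mem_filter.mp (L.orderEmbOfFin_mem hL i)).2
  have hdisj i j : ord i ≠ f (ord j) := fun h => by
    have := hord i
    rw [h, hf] at this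
    exact lt_asymm this (hord j)
  let σ := Equiv.ofBijective (interleave ord (f ∘ ord)) (Finite.injective_iff_bijective.mp
    (interleave_injective ord.injective (hf.injective.comp ord.injective) hdisj))
  have hσ_even i : σ (evenIdx i) = ord i := interleave_evenIdx _ _ i
  have hσ_odd i : σ (oddIdx i) = f (ord i) := interleave_oddIdx _ _ i
  refine ⟨σ, mem_filter.mpr ⟨mem_univ _, fun i => ?_, fun i j hij => ?_⟩, fun i => ?_⟩
  · simpa only [hσ_even, hσ_odd] using hord i
  · simpa only [hσ_even] using ord.strictMono hij
  · rw [hσ_even, hσ_odd]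

theorem exists_mem_pfaffianPerms_range_pairEdge {M : Finset (Sym2 (Fin (2 * m)))}
    (hnd : ∀ e ∈ M, ¬ e.IsDiag)
    (hpw : (M : Set (Sym2 (Fin (2 * m)))).Pairwise fun e f => ∀ v, v ∈ e → v ∉ f)
    (hcov : ∀ v, ∃ e ∈ M, v ∈ e) :
    ∃ σ ∈ pfaffianPerms m, ∀ e, e ∈ M ↔ e ∈ Set.range (pairEdge σ) := by
  obtain ⟨f, hf, hfix, hM⟩ := exists_involutive_of_perfect_matching hnd hpw hcov
  obtain ⟨σ, hσ, hσf⟩ := exists_mem_pfaffianPerms_of_involutive hf hfix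
  refine ⟨σ, hσ, fun e => ⟨fun he => ?_, ?_⟩⟩
  · induction e with | _ a b
    have hb := (hM a b).mp he
    rcases exists_evenIdx_or_oddIdx_eq (σ.symm a) with ⟨i, hi⟩ | ⟨i, hi⟩ <;> refine ⟨i, ?_⟩
    · rw [pairEdge, hσf, hi, σ.apply_symm_apply, hb]
    · have ha : a = f (σ (evenIdx i)) := by rw [← hσf, hi, σ.apply_symm_apply]
      rw [pairEdge, hσf, hb, ha, hf, Sym2.eq_swap]
  · rintro ⟨i, rfl⟩
    exact (hM _ _).mpr (hσf i)

theorem isPerfectMatchingPairOfWeight_image_pairEdge {G₀ G₁ : SimpleGraph (Fin (2 * m))}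
    {k : ℕ} (σ : Equiv.Perm (Fin (2 * m))) {S : Finset (Fin m)} (hS : #S = k)
    (h₀ : ∀ i ∉ S, pairEdge σ i ∈ G₀.edgeSet) (h₁ : ∀ i ∈ S, pairEdge σ i ∈ G₁.edgeSet) :
    IsPerfectMatchingPairOfWeight G₀ G₁ ((univ \ S).image (pairEdge σ))
      (S.image (pairEdge σ)) k := by
  have hunion : (univ \ S).image (pairEdge σ) ∪ S.image (pairEdge σ) =
      univ.image (pairEdge σ) := by
    rw [← image_union, sdiff_union_of_subset (subset_univ S)]
  refine ⟨?_, ?_, ?_, ?_, fun v => ?_, ?_⟩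
  · rw [coe_image]
    rintro _ ⟨i, hi, rfl⟩
    exact h₀ i (mem_sdiff.mp hi).2
  · rw [coe_image]
    rintro _ ⟨i, hi, rfl⟩
    exact h₁ i hi
  · exact (disjoint_image (pairEdge_injective σ)).mpr sdiff_disjoint
  · rw [hunion, coe_image]
    rintro _ ⟨i, -, rfl⟩ _ ⟨j, -, rfl⟩ hne v hvi hvj
    exact hne (congrArg _ (eq_of_mem_pairEdge hvi hvj))
  · obtain ⟨i, hi⟩ := exists_mem_pairEdge σ v
    exact ⟨pairEdge σ i, hunion ▸ mem_image_of_mem _ (mem_univ i), hi⟩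
  · rw [card_image_of_injective _ (pairEdge_injective σ), hS]

end Pairing

section MatchingSum

variable {R : Type*} [CommRing R] {m : ℕ}

/-- The expansion of `[y^k] pf` of the skew-symmetric matrix with entry `w₀ e + y • w₁ e` at
`(u, v)`, `u < v`, `e = s(u, v)`: `S` is the set of the `k` pairs that contribute their
`y`-part. -/
def matchingSum (k : ℕ) (w₀ w₁ : Sym2 (Fin (2 * m)) → R) : R :=
  ∑ σ ∈ pfaffianPerms m, ∑ S ∈ powersetCard k univ,
    (Equiv.Perm.sign σ : ℤ) • ∏ i, if i ∈ S then w₁ (pairEdge σ i) else w₀ (pairEdge σ i)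

theorem map_matchingSum {R' : Type*} [CommRing R'] (f : R →+* R') (k : ℕ)
    (w₀ w₁ : Sym2 (Fin (2 * m)) → R) :
    f (matchingSum k w₀ w₁) = matchingSum k (f ∘ w₀) (f ∘ w₁) := by
  simp only [matchingSum, map_sum, map_zsmul, map_prod, apply_ite f, Function.comp_apply]

theorem totalDegree_matchingSum_le {ι : Type*} {k : ℕ}
    {w₀ w₁ : Sym2 (Fin (2 * m)) → MvPolynomial ι R}
    (hw₀ : ∀ e, (w₀ e).totalDegree ≤ 1) (hw₁ : ∀ e, (w₁ e).totalDegree ≤ 1) :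
    (matchingSum k w₀ w₁).totalDegree ≤ m := by
  refine MvPolynomial.totalDegree_finsetSum_le fun σ _ =>
    MvPolynomial.totalDegree_finsetSum_le fun S _ => (MvPolynomial.totalDegree_smul_le _ _).trans <|
      (MvPolynomial.totalDegree_finsetProd _ _).trans ?_
  calc ∑ i, _ ≤ ∑ _i : Fin m, 1 := sum_le_sum fun i _ => by split_ifs; exacts [hw₁ _, hw₀ _]
    _ = m := by simp

theorem matchingSum_eq_zero {G₀ G₁ : SimpleGraph (Fin (2 * m))} {k : ℕ}
    {w₀ w₁ : Sym2 (Fin (2 * m)) → R}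
    (hw₀ : ∀ e, w₀ e ≠ 0 → e ∈ G₀.edgeSet) (hw₁ : ∀ e, w₁ e ≠ 0 → e ∈ G₁.edgeSet)
    (hno : ¬ ∃ M₀ M₁, IsPerfectMatchingPairOfWeight G₀ G₁ M₀ M₁ k) :
    matchingSum k w₀ w₁ = 0 := by
  refine sum_eq_zero fun σ _ => sum_eq_zero fun S hS => ?_
  by_contra hne
  have hfac i : (if i ∈ S then w₁ (pairEdge σ i) else w₀ (pairEdge σ i)) ≠ 0 :=
    fun h => right_ne_zero_of_smul hne (prod_eq_zero (mem_univ i) h)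
  exact hno ⟨_, _, isPerfectMatchingPairOfWeight_image_pairEdge σ (mem_powersetCard_univ.mp hS)
    (fun i hi => hw₀ _ (by simpa [hi] using hfac i))
    (fun i hi => hw₁ _ (by simpa [hi] using hfac i))⟩

theorem matchingSum_indicator_ne_zero [Nontrivial R] {G₀ G₁ : SimpleGraph (Fin (2 * m))}
    {M₀ M₁ : Finset (Sym2 (Fin (2 * m)))} {k : ℕ}
    (hM : IsPerfectMatchingPairOfWeight G₀ G₁ M₀ M₁ k) :
    matchingSum k (fun e => if e ∈ M₀ then (1 : R) else 0) (fun e => if e ∈ M₁ then 1 else 0)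
      ≠ 0 := by
  obtain ⟨hM₀, hM₁, hdisj, hpw, hcov, hk⟩ := hM
  have hnd : ∀ e ∈ M₀ ∪ M₁, ¬ e.IsDiag := fun e he => (mem_union.mp he).elim
    (fun h => G₀.not_isDiag_of_mem_edgeSet (hM₀ h))
    (fun h => G₁.not_isDiag_of_mem_edgeSet (hM₁ h))
  obtain ⟨σ₀, hσ₀, hrange⟩ := exists_mem_pfaffianPerms_range_pairEdge hnd hpw hcov
  set S₀ := M₁.preimage (pairEdge σ₀) (pairEdge_injective σ₀).injOn
  have hS₀ : #S₀ = k := by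
    rw [card_preimage, filter_true_of_mem fun e he => (hrange e).mp (mem_union_right _ he), hk]
  have hunique : ∀ σ ∈ pfaffianPerms m, ∀ S : Finset (Fin m),
      (∏ i, if i ∈ S then (if pairEdge σ i ∈ M₁ then (1 : R) else 0)
        else (if pairEdge σ i ∈ M₀ then 1 else 0)) ≠ 0 → σ = σ₀ ∧ S = S₀ := by
    intro σ hσ S hne
    have hfac i : (i ∈ S → pairEdge σ i ∈ M₁) ∧ (i ∉ S → pairEdge σ i ∈ M₀) := by
      have := fun h => hne (prod_eq_zero (mem_univ i) h)
      by_cases hi : i ∈ S <;> simp_all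
    obtain rfl : σ = σ₀ := eq_of_forall_pairEdge_mem_range hσ hσ₀ fun i => (hrange _).mp <| by
      by_cases hi : i ∈ S
      exacts [mem_union_right _ ((hfac i).1 hi), mem_union_left _ ((hfac i).2 hi)]
    refine ⟨rfl, ext fun i => ?_⟩
    by_cases hi : i ∈ S
    · simp [S₀, hi, (hfac i).1 hi]
    · simpa [S₀, hi] using disjoint_left.mp hdisj ((hfac i).2 hi)
  rw [matchingSum, ← sum_product', sum_eq_single_of_mem (σ₀, S₀)
    (mem_product.mpr ⟨hσ₀, mem_powersetCard_univ.mpr hS₀⟩)]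
  · rw [prod_eq_one fun i _ => ?_]
    · rcases Int.units_eq_one_or (Equiv.Perm.sign σ₀) with h | h <;> simp [h]
    by_cases hi : i ∈ S₀
    · simp [hi, mem_preimage.mp hi]
    · have hi' : pairEdge σ₀ i ∉ M₁ := by simpa [S₀] using hi
      have := (hrange (pairEdge σ₀ i)).mpr ⟨i, rfl⟩
      simp [hi, (mem_union.mp this).resolve_right hi']
  · intro p hp hne
    by_contra h
    exact hne (Prod.ext_iff.mpr (hunique p.1 (mem_product.mp hp).1 p.2 (right_ne_zero_of_smul h)))

end MatchingSum

namespace SimpleGraph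

noncomputable def edgeWeight {V R : Type*} [Zero R] (G : SimpleGraph V) (r : G.edgeSet → R)
    (e : Sym2 V) : R :=
  if h : e ∈ G.edgeSet then r ⟨e, h⟩ else 0

variable {V R S : Type*} [Zero R] [Zero S] {G : SimpleGraph V}

theorem mem_edgeSet_of_edgeWeight_ne_zero {r : G.edgeSet → R} {e : Sym2 V}
    (h : G.edgeWeight r e ≠ 0) : e ∈ G.edgeSet := by
  by_contra he
  exact h (dif_neg he)

theorem comp_edgeWeight {F : Type*} [FunLike F R S] [ZeroHomClass F R S] (f : F)
    (r : G.edgeSet → R) : f ∘ G.edgeWeight r = G.edgeWeight (f ∘ r) := by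
  ext e
  simp only [Function.comp_apply, edgeWeight, apply_dite f, map_zero]

end SimpleGraph

theorem tutteVals_of_lt (F : Type) [Field F] {n : ℕ} (G : SimpleGraph (Fin n))
    (r : G.edgeSet → F) {u v : Fin n} (h : u < v) :
    tutteVals F G r u v = G.edgeWeight r s(u, v) := by
  by_cases hadj : G.Adj u v
  · simp [tutteVals, SimpleGraph.edgeWeight, hadj, h]
  · simp [tutteVals, SimpleGraph.edgeWeight, hadj]

open Polynomial in
theorem coeff_pfaffian_map_C_add_X_smul_map_C {R : Type} [CommRing R] {m : ℕ}
    (A B : Matrix (Fin (2 * m)) (Fin (2 * m)) R) (k : ℕ) :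
    (pfaffian (A.map C + (X : R[X]) • B.map C)).coeff k =
      ∑ σ ∈ pfaffianPerms m, ∑ S ∈ powersetCard k univ, (Equiv.Perm.sign σ : ℤ) •
        ∏ i, if i ∈ S then B (σ (evenIdx i)) (σ (oddIdx i))
          else A (σ (evenIdx i)) (σ (oddIdx i)) := by
  simp only [pfaffian_eq_sum_pfaffianPerms, finsetSum_coeff, coeff_smul, Matrix.add_apply,
    Matrix.smul_apply, Matrix.map_apply, smul_eq_mul, coeff_prod_C_add_X_mul_C, smul_sum]

theorem coeff_pfaffian_substWeightedTutteMatrix (F : Type) [Field F] {m : ℕ}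
    (G₀ G₁ : SimpleGraph (Fin (2 * m))) (r₀ : G₀.edgeSet → F) (r₁ : G₁.edgeSet → F)
    (k : ℕ) :
    (pfaffian (substWeightedTutteMatrix F G₀ G₁ r₀ r₁)).coeff k =
      matchingSum k (G₀.edgeWeight r₀) (G₁.edgeWeight r₁) := by
  rw [substWeightedTutteMatrix, coeff_pfaffian_map_C_add_X_smul_map_C, matchingSum]
  refine sum_congr rfl fun σ hσ => ?_
  have hlt := (mem_filter.mp hσ).2.1
  simp only [tutteVals_of_lt _ _ _ (hlt _), pairEdge]

/-- `[y^k] pf` of the Tutte matrix of `G₀ + y G₁` with an indeterminate `X (inl e)` for each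
edge `e` of `G₀` and `X (inr e)` for each edge `e` of `G₁`. -/
noncomputable def exactMatchingPolynomial (R : Type*) [CommRing R] {m : ℕ}
    (G₀ G₁ : SimpleGraph (Fin (2 * m))) (k : ℕ) : MvPolynomial (G₀.edgeSet ⊕ G₁.edgeSet) R :=
  matchingSum k (G₀.edgeWeight fun e => MvPolynomial.X (.inl e))
    (G₁.edgeWeight fun e => MvPolynomial.X (.inr e))

section ExactMatchingPolynomial

variable {R : Type*} [CommRing R] {m : ℕ} {G₀ G₁ : SimpleGraph (Fin (2 * m))} {k : ℕ}

theorem eval_exactMatchingPolynomial (r₀ : G₀.edgeSet → R) (r₁ : G₁.edgeSet → R) :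
    MvPolynomial.eval (Sum.elim r₀ r₁) (exactMatchingPolynomial R G₀ G₁ k) =
      matchingSum k (G₀.edgeWeight r₀) (G₁.edgeWeight r₁) := by
  rw [exactMatchingPolynomial, map_matchingSum, SimpleGraph.comp_edgeWeight,
    SimpleGraph.comp_edgeWeight]
  simp [Function.comp_def]

theorem totalDegree_exactMatchingPolynomial_le :
    (exactMatchingPolynomial R G₀ G₁ k).totalDegree ≤ m := by
  have h {G : SimpleGraph (Fin (2 * m))} (x : G.edgeSet → G₀.edgeSet ⊕ G₁.edgeSet)
      (e : Sym2 (Fin (2 * m))) :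
      (G.edgeWeight (fun a => (MvPolynomial.X (x a) : MvPolynomial _ R)) e).totalDegree ≤ 1 := by
    unfold SimpleGraph.edgeWeight
    split_ifs
    · exact (MvPolynomial.totalDegree_monomial_le _ _).trans (by simp)
    · simp
  exact totalDegree_matchingSum_le (h _) (h _)

theorem exactMatchingPolynomial_ne_zero [Nontrivial R] {M₀ M₁ : Finset (Sym2 (Fin (2 * m)))}
    (hM : IsPerfectMatchingPairOfWeight G₀ G₁ M₀ M₁ k) :
    exactMatchingPolynomial R G₀ G₁ k ≠ 0 := by
  have hind {G : SimpleGraph (Fin (2 * m))} {M : Finset (Sym2 (Fin (2 * m)))}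
      (hMG : ↑M ⊆ G.edgeSet) : G.edgeWeight (fun e => if e.1 ∈ M then (1 : R) else 0) =
        fun e => if e ∈ M then 1 else 0 := by
    ext e
    by_cases he : e ∈ M
    · simp [SimpleGraph.edgeWeight, hMG he, he]
    · simp [SimpleGraph.edgeWeight, he]
  intro h
  apply matchingSum_indicator_ne_zero (R := R) hM
  rw [← hind hM.1, ← hind hM.2.1, ← eval_exactMatchingPolynomial, h, map_zero]

end ExactMatchingPolynomial

theorem randomized_exact_matching_test_general (F : Type) [Field F] [Fintype F] (m : ℕ)
    (G₀ G₁ : SimpleGraph (Fin (2 * m)))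
    [DecidableRel G₀.Adj] [DecidableRel G₁.Adj] (k : ℕ) :
    ((∃ M₀ M₁, IsPerfectMatchingPairOfWeight G₀ G₁ M₀ M₁ k) →
      ((Finset.univ.filter
          (fun r : (G₀.edgeSet → F) × (G₁.edgeSet → F) =>
            (pfaffian (substWeightedTutteMatrix F G₀ G₁ r.1 r.2)).coeff k = 0)).card : ℝ) /
          (Fintype.card ((G₀.edgeSet → F) × (G₁.edgeSet → F)) : ℝ) ≤
        ((2 * m : ℕ) : ℝ) / (Fintype.card F : ℝ)) ∧
    ((¬ ∃ M₀ M₁, IsPerfectMatchingPairOfWeight G₀ G₁ M₀ M₁ k) →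
      ∀ r₀ : G₀.edgeSet → F, ∀ r₁ : G₁.edgeSet → F,
        (pfaffian (substWeightedTutteMatrix F G₀ G₁ r₀ r₁)).coeff k = 0) := by
  refine ⟨fun ⟨M₀, M₁, hM⟩ => ?_, fun hno r₀ r₁ => ?_⟩
  · set P := exactMatchingPolynomial F G₀ G₁ k
    let e := (Equiv.sumArrowEquivProdArrow G₀.edgeSet G₁.edgeSet F).symm
    have hzeros : #{r : (G₀.edgeSet → F) × (G₁.edgeSet → F) |
        (pfaffian (substWeightedTutteMatrix F G₀ G₁ r.1 r.2)).coeff k = 0} =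
          #{x | MvPolynomial.eval x P = 0} := card_equiv e fun r => by
      rw [show e r = Sum.elim r.1 r.2 from rfl]
      simp [P, eval_exactMatchingPolynomial, coeff_pfaffian_substWeightedTutteMatrix]
    rw [hzeros, Fintype.card_congr e]
    calc _ ≤ (P.totalDegree : ℝ) / Fintype.card F :=
          MvPolynomial.card_filter_eval_eq_zero_div_le (exactMatchingPolynomial_ne_zero hM)
      _ ≤ _ := by
          gcongr
          exact totalDegree_exactMatchingPolynomial_le.trans (by omega)
  · rw [coeff_pfaffian_substWeightedTutteMatrix]
    exact matchingSum_eq_zero (fun _ => SimpleGraph.mem_edgeSet_of_edgeWeight_ne_zero)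
      (fun _ => SimpleGraph.mem_edgeSet_of_edgeWeight_ne_zero) hno

/-- Randomized exact matching test correctness: choosing the values `r_e ∈ F`
independently and uniformly at random (i.e., `(r₀, r₁)` uniform in `F^{E₀ ⊔ E₁}`), for a
fixed `k ∈ {0, …, n/2}` (`n = 2m`): if `G = G₀ + G₁` has a perfect matching of weight
exactly `k` then `Pr([y^k] pf T̃(G₀, G₁) = 0) ≤ n/|F|`, and if it has none then
`[y^k] pf T̃(G₀, G₁) = 0` always. -/
theorem randomized_exact_matching_test (F : Type) [Field F] [Fintype F] (m : ℕ)
    (hm : 0 < m) (G₀ G₁ : SimpleGraph (Fin (2 * m)))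
    [DecidableRel G₀.Adj] [DecidableRel G₁.Adj] (k : ℕ) (hk : k ≤ m) :
    ((∃ M₀ M₁, IsPerfectMatchingPairOfWeight G₀ G₁ M₀ M₁ k) →
      ((Finset.univ.filter
          (fun r : (G₀.edgeSet → F) × (G₁.edgeSet → F) =>
            (pfaffian (substWeightedTutteMatrix F G₀ G₁ r.1 r.2)).coeff k = 0)).card : ℝ) /
          (Fintype.card ((G₀.edgeSet → F) × (G₁.edgeSet → F)) : ℝ) ≤
        ((2 * m : ℕ) : ℝ) / (Fintype.card F : ℝ)) ∧
    ((¬ ∃ M₀ M₁, IsPerfectMatchingPairOfWeight G₀ G₁ M₀ M₁ k) →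
      ∀ r₀ : G₀.edgeSet → F, ∀ r₁ : G₁.edgeSet → F,
        (pfaffian (substWeightedTutteMatrix F G₀ G₁ r₀ r₁)).coeff k = 0) :=
  randomized_exact_matching_test_general F m G₀ G₁ k
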